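/- arXiv:2305.12568 — 2 statements merged into one kernel-verified Lean document; each statement's English description precedes it below -/
import Mathlib

section
/- For any matrix L in the symmetric positive definite d×d matrices, the inequality λ_max(L·diag(L⁻¹)) ≥ det(L⁻¹·diag(L))^(1/d) holds, where diag(A) denotes the diagonal matrix with the same diagonal as A. -/
/-!
Write `D = diag L`, `C = diag L⁻¹`. Both `L⁻¹ D` and `L C` have the trace `∑ᵢ Lᵢᵢ (L⁻¹)ᵢᵢ`.
Conjugating by `√D`, resp. `√C`, turns them into the positive semidefinite matrices
`√D L⁻¹ √D` and `√C L √C` with the same determinant, trace and spectrum. AM-GM on the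
eigenvalues of the first bounds `det (L⁻¹ D) ^ (1/d)` by the mean trace, and the mean trace
of the second is at most its largest eigenvalue.
-/

open Matrix

lemma spectrum_mul_mul_units {R A : Type*} [CommSemiring R] [Ring A] [Algebra R A]
    (a : A) (u : Aˣ) : spectrum R (a * (u * u)) = spectrum R (u * a * u) := by
  rw [← spectrum.units_conjugate' (u := u) (a := u * a * u)]
  simp [mul_assoc]

namespace Matrix

variable {n : Type*} [Fintype n]

lemma trace_mul_mul_self {R : Type*} [CommSemiring R] (A D : Matrix n n R) :
    (A * (D * D)).trace = (D * A * D).trace := by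
  rw [← mul_assoc, trace_mul_cycle]

variable [DecidableEq n]

lemma diagonal_sqrt_mul_self {c : n → ℝ} (hc : ∀ i, 0 ≤ c i) :
    diagonal (fun i => √(c i)) * diagonal (fun i => √(c i)) = diagonal c := by
  rw [diagonal_mul_diagonal]
  exact congrArg diagonal (funext fun i => Real.mul_self_sqrt (hc i))

lemma trace_mul_diagonal_diag_comm {R : Type*} [CommSemiring R] (A B : Matrix n n R) :
    (A * diagonal B.diag).trace = (B * diagonal A.diag).trace := by
  simp [trace, mul_comm]

lemma IsHermitian.trace_div_card_le_sSup_spectrum [Nonempty n] {A : Matrix n n ℝ}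
    (hA : A.IsHermitian) : A.trace / Fintype.card n ≤ sSup (spectrum ℝ A) := by
  rw [div_le_iff₀ (mod_cast Fintype.card_pos), hA.trace_eq_sum_eigenvalues]
  calc ∑ i, hA.eigenvalues i ≤ ∑ _i : n, sSup (spectrum ℝ A) :=
        Finset.sum_le_sum fun i _ =>
          le_csSup A.finite_spectrum.bddAbove (hA.eigenvalues_mem_spectrum_real i)
    _ = sSup (spectrum ℝ A) * Fintype.card n := by simp [mul_comm]

lemma PosSemidef.det_rpow_le_trace_div_card [Nonempty n] {A : Matrix n n ℝ}
    (hA : A.PosSemidef) : A.det ^ ((1 : ℝ) / Fintype.card n) ≤ A.trace / Fintype.card n := by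
  have := Real.geom_mean_le_arith_mean Finset.univ (fun _ => 1) hA.1.eigenvalues
    (by simp) (by simpa using Fintype.card_pos) (fun i _ => hA.eigenvalues_nonneg i)
  simpa [hA.1.det_eq_prod_eigenvalues, hA.1.trace_eq_sum_eigenvalues] using this

lemma IsHermitian.trace_mul_diagonal_div_card_le_sSup_spectrum [Nonempty n]
    {A : Matrix n n ℝ} (hA : A.IsHermitian) {c : n → ℝ} (hc : ∀ i, 0 < c i) :
    (A * diagonal c).trace / Fintype.card n ≤ sSup (spectrum ℝ (A * diagonal c)) := by
  have hDD := diagonal_sqrt_mul_self fun i => (hc i).le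
  set D := diagonal fun i => √(c i)
  have hD : IsUnit D := isUnit_diagonal.mpr <| Pi.isUnit_iff.mpr fun i =>
    (Real.sqrt_pos.mpr (hc i)).ne'.isUnit
  have hDAD : (D * A * D).IsHermitian := by
    simpa [D, diagonal_conjTranspose] using isHermitian_mul_mul_conjTranspose D hA
  rw [← hDD, ← hD.unit_spec, spectrum_mul_mul_units, hD.unit_spec, trace_mul_mul_self]
  exact hDAD.trace_div_card_le_sSup_spectrum

lemma PosSemidef.det_mul_diagonal_rpow_le_trace_div_card [Nonempty n]
    {A : Matrix n n ℝ} (hA : A.PosSemidef) {c : n → ℝ} (hc : ∀ i, 0 ≤ c i) :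
    (A * diagonal c).det ^ ((1 : ℝ) / Fintype.card n) ≤
      (A * diagonal c).trace / Fintype.card n := by
  have hDD := diagonal_sqrt_mul_self hc
  set D := diagonal fun i => √(c i)
  have hDAD : (D * A * D).PosSemidef := by
    simpa [D, diagonal_conjTranspose] using hA.mul_mul_conjTranspose_same D
  have hdet : (A * (D * D)).det = (D * A * D).det := by
    simp only [det_mul]
    ring
  rw [← hDD, hdet, trace_mul_mul_self]
  exact hDAD.det_rpow_le_trace_div_card

end Matrix

theorem stmt_0 (d : ℕ) (hd : 0 < d) (L : Matrix (Fin d) (Fin d) ℝ) (hL : L.PosDef) :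
    (L⁻¹ * Matrix.diagonal L.diag).det ^ ((1 : ℝ) / d) ≤
      sSup (spectrum ℝ (L * Matrix.diagonal (L⁻¹).diag)) := by
  have : Nonempty (Fin d) := ⟨⟨0, hd⟩⟩
  calc (L⁻¹ * diagonal L.diag).det ^ ((1 : ℝ) / d)
      ≤ (L⁻¹ * diagonal L.diag).trace / d := by
        simpa only [Fintype.card_fin] using
          hL.inv.posSemidef.det_mul_diagonal_rpow_le_trace_div_card (c := L.diag)
            fun _ => hL.diag_pos.le
    _ = (L * diagonal (L⁻¹).diag).trace / d := by rw [trace_mul_diagonal_diag_comm]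
    _ ≤ sSup (spectrum ℝ (L * diagonal (L⁻¹).diag)) := by
        simpa only [Fintype.card_fin] using
          hL.isHermitian.trace_mul_diagonal_div_card_le_sSup_spectrum (c := L⁻¹.diag)
            fun _ => hL.inv.diag_pos
end

section
/- Let f : ℝ^d → ℝ be L-matrix-smooth with f bounded below by f^inf, let D ∈ S^d_{++} satisfy DLD ⪯ D, and let x^{k+1} = x^k − D∇f(x^k) for k = 0,…,K−1. Then (1/K)∑_{k=0}^{K−1} ‖∇f(x^k)‖²_D ≤ 2(f(x^0) − f^inf)/K. -/
open Matrix
open scoped RealInnerProductSpace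

/-! Plugging `x = y - D ∇f(y)` into the smoothness bound and using `DLD ⪯ D` gives the descent
`f(x^{k+1}) ≤ f(x^k) - ½‖∇f(x^k)‖²_D`; summing over `k` telescopes to `f(x^0) - f(x^K)`,
and `f(x^K) ≥ f^inf`. -/

namespace LinearMap

variable {E : Type*} [NormedAddCommGroup E] [InnerProductSpace ℝ E]

theorem inner_map_map_le_of_comp_le {L D : E →ₗ[ℝ] E} (hD : D.IsSymmetric)
    (hDLD : D ∘ₗ L ∘ₗ D ≤ D) (u : E) : ⟪L (D u), D u⟫ ≤ ⟪u, D u⟫ := by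
  have h := ((le_def _ _).mp hDLD).inner_nonneg_left u
  rw [sub_apply, inner_sub_left, comp_apply, comp_apply, hD (L (D u))] at h
  linarith [real_inner_comm u (D u)]

theorem le_sub_half_inner_of_matrix_smooth {L D : E →ₗ[ℝ] E} (hD : D.IsSymmetric)
    (hDLD : D ∘ₗ L ∘ₗ D ≤ D) {f : E → ℝ} {g : E → E}
    (hsmooth : ∀ x y, f x ≤ f y + ⟪g y, x - y⟫ + (1 / 2) * ⟪L (x - y), x - y⟫) (y : E) :
    f (y - D (g y)) ≤ f y - (1 / 2) * ⟪g y, D (g y)⟫ := by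
  have h := hsmooth (y - D (g y)) y
  rw [sub_sub_cancel_left, map_neg, inner_neg_neg, inner_neg_right] at h
  linarith [inner_map_map_le_of_comp_le hD hDLD (g y)]

end LinearMap

theorem Matrix.toEuclideanLin_mul {𝕜 l m n : Type*} [RCLike 𝕜] [Fintype m] [DecidableEq m]
    [Fintype n] [DecidableEq n] (A : Matrix l m 𝕜) (B : Matrix m n 𝕜) :
    toEuclideanLin (A * B) = toEuclideanLin A ∘ₗ toEuclideanLin B := by
  ext v : 1
  simp [toLpLin_apply, mulVec_mulVec]

theorem average_le_of_le_mul_sub_succ {a F : ℕ → ℝ} {c m : ℝ} (hc : 0 ≤ c)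
    (h : ∀ k, a k ≤ c * (F k - F (k + 1))) (hF : ∀ k, m ≤ F k) (K : ℕ) :
    (1 / K : ℝ) * ∑ k ∈ Finset.range K, a k ≤ c * (F 0 - m) / K := by
  have hsum : ∑ k ∈ Finset.range K, a k ≤ c * (F 0 - m) :=
    calc ∑ k ∈ Finset.range K, a k
        ≤ ∑ k ∈ Finset.range K, c * (F k - F (k + 1)) := Finset.sum_le_sum fun k _ => h k
      _ = c * (F 0 - F K) := by rw [← Finset.mul_sum, Finset.sum_range_sub']
      _ ≤ c * (F 0 - m) := by gcongr; exact hF K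
  rw [one_div_mul_eq_div]
  gcongr

theorem stmt_14_general (d : ℕ) (L D : Matrix (Fin d) (Fin d) ℝ) (hD : D.PosDef)
    (hDLD : (D - D * L * D).PosSemidef)
    (f : EuclideanSpace ℝ (Fin d) → ℝ) (g : EuclideanSpace ℝ (Fin d) → EuclideanSpace ℝ (Fin d))
    (hsmooth : ∀ x y, f x ≤ f y + ⟪g y, x - y⟫ +
      (1 / 2) * ⟪Matrix.toEuclideanLin L (x - y), x - y⟫)
    (finf : ℝ) (hbdd : ∀ x, finf ≤ f x)
    (K : ℕ) (x : ℕ → EuclideanSpace ℝ (Fin d))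
    (hx : ∀ k, x (k + 1) = x k - Matrix.toEuclideanLin D (g (x k))) :
    (1 / K : ℝ) * ∑ k ∈ Finset.range K, ⟪g (x k), Matrix.toEuclideanLin D (g (x k))⟫ ≤
      2 * (f (x 0) - finf) / K := by
  have hDsymm : (toEuclideanLin D).IsSymmetric := isSymmetric_toEuclideanLin_iff.mpr hD.isHermitian
  have hLoewner : toEuclideanLin D ∘ₗ toEuclideanLin L ∘ₗ toEuclideanLin D ≤ toEuclideanLin D := by
    rw [LinearMap.le_def, ← toEuclideanLin_mul, ← toEuclideanLin_mul, ← map_sub]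
    exact isPositive_toEuclideanLin_iff.mpr (by rwa [← Matrix.mul_assoc])
  refine average_le_of_le_mul_sub_succ zero_le_two (fun k => ?_) (fun k => hbdd (x k)) K
  have hdescent := LinearMap.le_sub_half_inner_of_matrix_smooth hDsymm hLoewner hsmooth (x k)
  rw [hx k]
  linarith

theorem stmt_14 (d : ℕ) (L D : Matrix (Fin d) (Fin d) ℝ) (hL : L.PosDef) (hD : D.PosDef)
    (hDLD : (D - D * L * D).PosSemidef)
    (f : EuclideanSpace ℝ (Fin d) → ℝ) (g : EuclideanSpace ℝ (Fin d) → EuclideanSpace ℝ (Fin d))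
    (hg : ∀ x, HasGradientAt f (g x) x)
    (hsmooth : ∀ x y, f x ≤ f y + ⟪g y, x - y⟫ +
      (1 / 2) * ⟪Matrix.toEuclideanLin L (x - y), x - y⟫)
    (finf : ℝ) (hbdd : ∀ x, finf ≤ f x)
    (K : ℕ) (x : ℕ → EuclideanSpace ℝ (Fin d))
    (hx : ∀ k, x (k + 1) = x k - Matrix.toEuclideanLin D (g (x k))) :
    (1 / K : ℝ) * ∑ k ∈ Finset.range K, ⟪g (x k), Matrix.toEuclideanLin D (g (x k))⟫ ≤
      2 * (f (x 0) - finf) / K :=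
  stmt_14_general d L D hD hDLD f g hsmooth finf hbdd K x hx
end
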